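/- Let G be a finite group, M a semi-Mackey functor on G valued in commutative monoids, and 𝒮 ⊆ M a semi-Mackey subfunctor. Then the objectwise localization 𝒮⁻¹M, with 𝒮⁻¹M(X) = 𝒮(X)⁻¹M(X), carries a unique semi-Mackey functor structure such that the localization maps ℓ_{𝒮,X} : M(X) → 𝒮⁻¹M(X) form a morphism of semi-Mackey functors: restrictions satisfy f^*(y/t) = f^*(y)/f^*(t) and transfers satisfy f_*(x/s) = f_*(x)/f_*(s). -/

import Mathlib

/-- A finite `G`-set: a finite type equipped with a `G`-action. -/
structure FinGSet (G : Type) [Group G] where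
  carrier : Type
  [fin : Fintype carrier]
  [act : MulAction G carrier]

attribute [instance] FinGSet.fin FinGSet.act

/-- A map of `G`-sets is equivariant if it commutes with the action. -/
def IsEquivariant {G : Type} [Group G] {X Y : FinGSet G}
    (f : X.carrier → Y.carrier) : Prop :=
  ∀ (g : G) (x : X.carrier), f (g • x) = g • f x

/-- The disjoint union of two finite `G`-sets. -/
def FinGSet.sum {G : Type} [Group G] (X Y : FinGSet G) : FinGSet G where
  carrier := X.carrier ⊕ Y.carrier

/-- A semi-Mackey functor on `G` with underlying family of commutative monoids `N`:
a contravariant functor `res` (restriction) and a covariant functor `tr`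
(transfer) on finite `G`-sets, additive on disjoint unions and satisfying the
Mackey (base change) condition on all pullback diagrams. -/
structure SemiMackey (G : Type) [Group G] (N : FinGSet G → Type)
    [∀ X, CommMonoid (N X)] where
  res : ∀ {X Y : FinGSet G} (f : X.carrier → Y.carrier), IsEquivariant f → (N Y →* N X)
  tr : ∀ {X Y : FinGSet G} (f : X.carrier → Y.carrier), IsEquivariant f → (N X →* N Y)
  res_id : ∀ (X : FinGSet G) (h : IsEquivariant (id : X.carrier → X.carrier)) (m : N X),
    res id h m = m
  tr_id : ∀ (X : FinGSet G) (h : IsEquivariant (id : X.carrier → X.carrier)) (m : N X),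
    tr id h m = m
  res_comp : ∀ {X Y Z : FinGSet G} (f : X.carrier → Y.carrier) (hf : IsEquivariant f)
    (g : Y.carrier → Z.carrier) (hg : IsEquivariant g)
    (hgf : IsEquivariant (g ∘ f)) (m : N Z),
    res (g ∘ f) hgf m = res f hf (res g hg m)
  tr_comp : ∀ {X Y Z : FinGSet G} (f : X.carrier → Y.carrier) (hf : IsEquivariant f)
    (g : Y.carrier → Z.carrier) (hg : IsEquivariant g)
    (hgf : IsEquivariant (g ∘ f)) (m : N X),
    tr (g ∘ f) hgf m = tr g hg (tr f hf m)
  additive : ∀ (X Y : FinGSet G)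
    (h₁ : IsEquivariant (X := X) (Y := FinGSet.sum X Y) Sum.inl)
    (h₂ : IsEquivariant (X := Y) (Y := FinGSet.sum X Y) Sum.inr),
    Function.Bijective (fun m : N (FinGSet.sum X Y) => (res Sum.inl h₁ m, res Sum.inr h₂ m))
  mackey : ∀ {P X W Y : FinGSet G}
    (f : X.carrier → Y.carrier) (hf : IsEquivariant f)
    (g : W.carrier → Y.carrier) (hg : IsEquivariant g)
    (pX : P.carrier → X.carrier) (hpX : IsEquivariant pX)
    (pW : P.carrier → W.carrier) (hpW : IsEquivariant pW)
    (hcomm : ∀ p, f (pX p) = g (pW p)),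
    Function.Bijective
      (fun p : P.carrier =>
        (⟨(pX p, pW p), hcomm p⟩ : {q : X.carrier × W.carrier // f q.1 = g q.2})) →
    ∀ m : N W, res f hf (tr g hg m) = tr pX hpX (res pW hpW m)

/-! Localization is functorial in monoid homomorphisms that preserve the chosen submonoids, so
restrictions and transfers descend to `𝒮⁻¹M`, and every axiom that is an identity between
composites (functoriality, the Mackey formula) descends with them. Additivity is not of this
form; instead, the Mackey formula applied to the coproduct injections shows that restrictions and
transfers along them exhibit `M(X ⊔ Y)` as a biproduct of `M(X)` and `M(Y)`, and a biproduct
decomposition compatible with the submonoids survives localization. Uniqueness holds because a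
localization is generated by fractions. -/

namespace Localization

variable {A B C : Type*} [CommMonoid A] [CommMonoid B] [CommMonoid C]
  {S : Submonoid A} {T : Submonoid B} {U : Submonoid C}

noncomputable def mapHom (φ : A →* B) (hφ : ∀ s ∈ S, φ s ∈ T) :
    Localization S →* Localization T :=
  (monoidOf S).map (fun s => hφ s s.2) (monoidOf T)

theorem mapHom_mk (φ : A →* B) (hφ : ∀ s ∈ S, φ s ∈ T) (a : A) (s : S) :
    mapHom φ hφ (mk a s) = mk (φ a) ⟨φ s, hφ s s.2⟩ := by
  simp only [mapHom, mk_eq_monoidOf_mk'_apply, Submonoid.LocalizationMap.map_mk']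

theorem mapHom_mapHom (φ : A →* B) (hφ : ∀ s ∈ S, φ s ∈ T) (ψ : B →* C)
    (hψ : ∀ t ∈ T, ψ t ∈ U) (m : Localization S) :
    mapHom ψ hψ (mapHom φ hφ m) = mapHom (ψ.comp φ) (fun s hs => hψ _ (hφ s hs)) m :=
  Submonoid.LocalizationMap.map_map _ _ _ _ m

theorem mapHom_congr {φ ψ : A →* B} (hφ : ∀ s ∈ S, φ s ∈ T) (hψ : ∀ s ∈ S, ψ s ∈ T)
    (h : ∀ a, φ a = ψ a) (m : Localization S) : mapHom φ hφ m = mapHom ψ hψ m := by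
  obtain rfl : φ = ψ := MonoidHom.ext h
  rfl

theorem mapHom_eq_self {φ : A →* A} (hφ : ∀ s ∈ S, φ s ∈ S) (h : ∀ a, φ a = a)
    (m : Localization S) : mapHom φ hφ m = m := by
  rw [mapHom_congr (ψ := MonoidHom.id A) hφ (fun s hs => hs) h]
  exact Submonoid.LocalizationMap.map_id _ m

theorem eq_mapHom {φ : A →* B} (hφ : ∀ s ∈ S, φ s ∈ T) {F : Localization S →* Localization T}
    (hF : ∀ a s, F (mk a s) = mk (φ a) ⟨φ s, hφ s s.2⟩) : F = mapHom φ hφ :=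
  MonoidHom.ext fun m => m.ind fun ⟨a, s⟩ => by rw [hF, mapHom_mk]

theorem bijective_mapHom_prod_of_biproduct {r₁ : A →* B} {r₂ : A →* C} {i₁ : B →* A}
    {i₂ : C →* A} (hr₁ : ∀ s ∈ S, r₁ s ∈ T) (hr₂ : ∀ s ∈ S, r₂ s ∈ U)
    (hi₁ : ∀ t ∈ T, i₁ t ∈ S) (hi₂ : ∀ u ∈ U, i₂ u ∈ S)
    (h₁₁ : ∀ b, r₁ (i₁ b) = b) (h₂₂ : ∀ c, r₂ (i₂ c) = c)
    (h₁₂ : ∀ c, r₁ (i₂ c) = 1) (h₂₁ : ∀ b, r₂ (i₁ b) = 1)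
    (hsum : ∀ a, i₁ (r₁ a) * i₂ (r₂ a) = a) :
    Function.Bijective fun m : Localization S => (mapHom r₁ hr₁ m, mapHom r₂ hr₂ m) := by
  refine Function.bijective_iff_has_inverse.2
    ⟨fun p => mapHom i₁ hi₁ p.1 * mapHom i₂ hi₂ p.2, fun m => ?_, fun ⟨x, y⟩ => ?_⟩
  · induction m using Localization.ind with
    | _ p =>
      simp only [mapHom_mk, mk_mul]
      congr 1
      · exact hsum _
      · exact Subtype.ext (hsum _)
  · induction x using Localization.ind with
    | _ p =>
    induction y using Localization.ind with
    | _ q =>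
      simp only [mapHom_mk, mk_mul, map_mul, Submonoid.coe_mul, h₁₁, h₂₂, h₁₂, h₂₁, mul_one,
        one_mul]

end Localization

instance (G : Type) [Group G] : MulAction G Empty where
  smul _ x := x
  one_smul _ := rfl
  mul_smul _ _ _ := rfl

abbrev FinGSet.empty (G : Type) [Group G] : FinGSet G := ⟨Empty⟩

namespace SemiMackey

variable {G : Type} [Group G] {N : FinGSet G → Type} [∀ X, CommMonoid (N X)]
  (M : SemiMackey G N)

theorem res_congr {X Y : FinGSet G} {f g : X.carrier → Y.carrier} (hf : IsEquivariant f)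
    (hg : IsEquivariant g) (h : f = g) (m : N Y) : M.res f hf m = M.res g hg m := by
  subst h
  rfl

/-- On an empty `G`-set the two coproduct injections of `W ⊔ W` coincide, so additivity
forces `M(W)` to be trivial. -/
theorem subsingleton_of_isEmpty (M : SemiMackey G N) (W : FinGSet G) [IsEmpty W.carrier] :
    Subsingleton (N W) := by
  have h₁ : IsEquivariant (X := W) (Y := W.sum W) Sum.inl := fun _ x => isEmptyElim x
  have h₂ : IsEquivariant (X := W) (Y := W.sum W) Sum.inr := fun _ x => isEmptyElim x
  refine ⟨fun a b => ?_⟩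
  obtain ⟨m, hm⟩ := (M.additive W W h₁ h₂).surjective (a, b)
  have ha : M.res Sum.inl h₁ m = a := congrArg Prod.fst hm
  have hb : M.res Sum.inr h₂ m = b := congrArg Prod.snd hm
  rw [← ha, ← hb]
  exact M.res_congr h₁ h₂ (funext isEmptyElim) m

theorem res_tr_of_injective {X Y : FinGSet G} (f : X.carrier → Y.carrier)
    (hf : IsEquivariant f) (hinj : Function.Injective f) (m : N X) :
    M.res f hf (M.tr f hf m) = m := by
  have hid : IsEquivariant (id : X.carrier → X.carrier) := fun _ _ => rfl
  have hdiag : Function.Bijective fun x : X.carrier =>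
      (⟨(id x, id x), rfl⟩ : {q : X.carrier × X.carrier // f q.1 = f q.2}) :=
    ⟨fun x y h => congrArg (fun q => q.1.1) h,
      fun ⟨(x, _), hxy⟩ => ⟨x, Subtype.ext (Prod.ext rfl (hinj hxy))⟩⟩
  rw [M.mackey f hf f hf id hid id hid (fun _ => rfl) hdiag, M.res_id, M.tr_id]

theorem res_tr_eq_one_of_disjoint {X W Y : FinGSet G} (f : X.carrier → Y.carrier)
    (hf : IsEquivariant f) (g : W.carrier → Y.carrier) (hg : IsEquivariant g)
    (hdisj : ∀ x w, f x ≠ g w) (m : N W) : M.res f hf (M.tr g hg m) = 1 := by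
  have hX : IsEquivariant (X := FinGSet.empty G) (Y := X) Empty.elim := fun _ x => x.elim
  have hW : IsEquivariant (X := FinGSet.empty G) (Y := W) Empty.elim := fun _ x => x.elim
  have hempty : Function.Bijective fun e : (FinGSet.empty G).carrier =>
      (⟨(Empty.elim e, Empty.elim e), Empty.elim e⟩ :
        {q : X.carrier × W.carrier // f q.1 = g q.2}) :=
    ⟨fun e => Empty.elim e, fun ⟨(x, w), h⟩ => (hdisj x w h).elim⟩
  have : Subsingleton (N (FinGSet.empty G)) := M.subsingleton_of_isEmpty _
  rw [M.mackey (P := FinGSet.empty G) f hf g hg _ hX _ hW (fun e => Empty.elim e) hempty,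
    Subsingleton.elim (M.res _ hW m) 1, map_one]

theorem tr_res_inl_mul_tr_res_inr (X Y : FinGSet G)
    (h₁ : IsEquivariant (X := X) (Y := X.sum Y) Sum.inl)
    (h₂ : IsEquivariant (X := Y) (Y := X.sum Y) Sum.inr) (m : N (X.sum Y)) :
    M.tr Sum.inl h₁ (M.res Sum.inl h₁ m) * M.tr Sum.inr h₂ (M.res Sum.inr h₂ m) = m := by
  refine (M.additive X Y h₁ h₂).injective (Prod.ext ?_ ?_) <;> dsimp only
  · rw [map_mul, M.res_tr_of_injective _ h₁ Sum.inl_injective,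
      M.res_tr_eq_one_of_disjoint _ h₁ _ h₂ (fun _ _ => Sum.inl_ne_inr), mul_one]
  · rw [map_mul, M.res_tr_of_injective _ h₂ Sum.inr_injective,
      M.res_tr_eq_one_of_disjoint _ h₂ _ h₁ (fun _ _ => Sum.inr_ne_inl), one_mul]

theorem ext {L L' : SemiMackey G N}
    (hres : ∀ {X Y : FinGSet G} (f : X.carrier → Y.carrier) (hf : IsEquivariant f),
      L.res f hf = L'.res f hf)
    (htr : ∀ {X Y : FinGSet G} (f : X.carrier → Y.carrier) (hf : IsEquivariant f),
      L.tr f hf = L'.tr f hf) : L = L' := by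
  obtain ⟨res, tr, _⟩ := L
  obtain ⟨res', tr', _⟩ := L'
  obtain rfl : @res = @res' := by funext X Y f hf; exact hres f hf
  obtain rfl : @tr = @tr' := by funext X Y f hf; exact htr f hf
  rfl

variable {M} (S : ∀ X : FinGSet G, Submonoid (N X))
  (hres : ∀ {X Y : FinGSet G} (f : X.carrier → Y.carrier) (hf : IsEquivariant f),
    ∀ s ∈ S Y, M.res f hf s ∈ S X)
  (htr : ∀ {X Y : FinGSet G} (f : X.carrier → Y.carrier) (hf : IsEquivariant f),
    ∀ s ∈ S X, M.tr f hf s ∈ S Y)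

open Localization in
noncomputable def localization : SemiMackey G fun X => Localization (S X) where
  res f hf := mapHom (M.res f hf) (hres f hf)
  tr f hf := mapHom (M.tr f hf) (htr f hf)
  res_id X h := mapHom_eq_self _ (M.res_id X h)
  tr_id X h := mapHom_eq_self _ (M.tr_id X h)
  res_comp f hf g hg hgf m := by
    rw [mapHom_mapHom]
    exact mapHom_congr _ _ (M.res_comp f hf g hg hgf) m
  tr_comp f hf g hg hgf m := by
    rw [mapHom_mapHom]
    exact mapHom_congr _ _ (M.tr_comp f hf g hg hgf) m
  additive X Y h₁ h₂ :=
    bijective_mapHom_prod_of_biproduct _ _ (htr _ h₁) (htr _ h₂)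
      (M.res_tr_of_injective _ h₁ Sum.inl_injective)
      (M.res_tr_of_injective _ h₂ Sum.inr_injective)
      (M.res_tr_eq_one_of_disjoint _ h₁ _ h₂ fun _ _ => Sum.inl_ne_inr)
      (M.res_tr_eq_one_of_disjoint _ h₂ _ h₁ fun _ _ => Sum.inr_ne_inl)
      (M.tr_res_inl_mul_tr_res_inr X Y h₁ h₂)
  mackey f hf g hg pX hpX pW hpW hcomm hpb m := by
    rw [mapHom_mapHom, mapHom_mapHom]
    exact mapHom_congr _ _ (M.mackey f hf g hg pX hpX pW hpW hcomm hpb) m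

end SemiMackey

/-- Given a semi-Mackey subfunctor `𝒮 ⊆ M`, the objectwise localizations
`𝒮(X)⁻¹M(X)` carry a unique semi-Mackey functor structure for which the
localization maps constitute a morphism of semi-Mackey functors; its
restrictions satisfy `f^*(y/t) = f^*(y)/f^*(t)` and its transfers satisfy
`f_*(x/s) = f_*(x)/f_*(s)`. -/
theorem semiMackey_localization_exists_unique {G : Type} [Group G]
    {N : FinGSet G → Type} [∀ X, CommMonoid (N X)] (M : SemiMackey G N)
    (S : ∀ X : FinGSet G, Submonoid (N X))
    (hres : ∀ {X Y : FinGSet G} (f : X.carrier → Y.carrier) (hf : IsEquivariant f),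
      ∀ s ∈ S Y, M.res f hf s ∈ S X)
    (htr : ∀ {X Y : FinGSet G} (f : X.carrier → Y.carrier) (hf : IsEquivariant f),
      ∀ s ∈ S X, M.tr f hf s ∈ S Y) :
    ∃! L : SemiMackey G (fun X => Localization (S X)),
      (∀ (X Y : FinGSet G) (f : X.carrier → Y.carrier) (hf : IsEquivariant f)
        (y : N Y) (t : S Y),
        L.res f hf (Localization.mk y t)
          = Localization.mk (M.res f hf y) ⟨M.res f hf t, hres f hf t t.2⟩) ∧
      (∀ (X Y : FinGSet G) (f : X.carrier → Y.carrier) (hf : IsEquivariant f)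
        (x : N X) (s : S X),
        L.tr f hf (Localization.mk x s)
          = Localization.mk (M.tr f hf x) ⟨M.tr f hf s, htr f hf s s.2⟩) := by
  refine ⟨SemiMackey.localization S hres htr,
    ⟨fun _ _ f hf => Localization.mapHom_mk _ (hres f hf),
      fun _ _ f hf => Localization.mapHom_mk _ (htr f hf)⟩, ?_⟩
  rintro L ⟨hL_res, hL_tr⟩
  exact SemiMackey.ext (fun f hf => Localization.eq_mapHom (hres f hf) (hL_res _ _ f hf))
    (fun f hf => Localization.eq_mapHom (htr f hf) (hL_tr _ _ f hf))
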